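/- arXiv:1804.10670 — 5 statements merged into one kernel-verified Lean document; each statement's English description precedes it below -/
import Mathlib

section
/- Let G be a connected graph and let T ⊆ V(G) be such that V(G) \ T is a resolving set of G. Then there exists a set S ⊆ V(G) \ T with |S| ≤ |T| such that S resolves T, i.e., for every pair of distinct u, v ∈ T there is w ∈ S with d(u,w) ≠ d(v,w). -/
private lemma aux_resolve {V : Type*} [Fintype V] [DecidableEq V]
    (G : SimpleGraph V) (W : Finset V) :
    ∀ n (T : Finset V), T.card ≤ n →
      (∀ x ∈ T, ∀ y ∈ T, x ≠ y → ∃ w ∈ W, G.dist w x ≠ G.dist w y) →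
      ∃ S : Finset V, S ⊆ W ∧ S.card ≤ T.card - 1 ∧
        ∀ x ∈ T, ∀ y ∈ T, x ≠ y → ∃ w ∈ S, G.dist w x ≠ G.dist w y := by
  intro n
  induction n with
  | zero =>
    intro T hT _
    refine ⟨∅, Finset.empty_subset _, by simp, ?_⟩
    intro x hx y hy hxy
    simp [Finset.card_eq_zero.mp (Nat.le_zero.mp hT)] at hx
  | succ n ih =>
    intro T hT hres
    by_cases h1 : T.card ≤ 1
    · refine ⟨∅, Finset.empty_subset _, by simp, ?_⟩
      intro x hx y hy hxy
      exact absurd (Finset.card_le_one.mp h1 x hx y hy) hxy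
    · push_neg at h1
      obtain ⟨u, hu, v, hv, huv⟩ := Finset.one_lt_card.mp h1
      obtain ⟨w, hwW, hw⟩ := hres u hu v hv huv
      set T₁ := T.filter (fun x => G.dist w x = G.dist w u) with hT₁
      set T₂ := T.filter (fun x => ¬ G.dist w x = G.dist w u) with hT₂
      have hcard : T₁.card + T₂.card = T.card :=
        Finset.card_filter_add_card_filter_not _
      have huT₁ : u ∈ T₁ := Finset.mem_filter.mpr ⟨hu, rfl⟩
      have hvT₂ : v ∈ T₂ := Finset.mem_filter.mpr ⟨hv, fun h => hw h.symm⟩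
      have h1pos : 1 ≤ T₁.card := Finset.card_pos.mpr ⟨u, huT₁⟩
      have h2pos : 1 ≤ T₂.card := Finset.card_pos.mpr ⟨v, hvT₂⟩
      have h1lt : T₁.card ≤ n := by omega
      have h2lt : T₂.card ≤ n := by omega
      obtain ⟨S₁, hS₁W, hS₁c, hS₁⟩ := ih T₁ h1lt (fun x hx y hy hxy =>
        hres x (Finset.mem_filter.mp hx).1 y (Finset.mem_filter.mp hy).1 hxy)
      obtain ⟨S₂, hS₂W, hS₂c, hS₂⟩ := ih T₂ h2lt (fun x hx y hy hxy =>
        hres x (Finset.mem_filter.mp hx).1 y (Finset.mem_filter.mp hy).1 hxy)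
      refine ⟨insert w (S₁ ∪ S₂), ?_, ?_, ?_⟩
      · exact Finset.insert_subset hwW (Finset.union_subset hS₁W hS₂W)
      · have := Finset.card_insert_le w (S₁ ∪ S₂)
        have := Finset.card_union_le S₁ S₂
        omega
      · intro x hx y hy hxy
        by_cases hxw : G.dist w x = G.dist w u
        · by_cases hyw : G.dist w y = G.dist w u
          · obtain ⟨z, hz, hzd⟩ := hS₁ x (Finset.mem_filter.mpr ⟨hx, hxw⟩)
              y (Finset.mem_filter.mpr ⟨hy, hyw⟩) hxy
            exact ⟨z, Finset.mem_insert_of_mem (Finset.mem_union_left _ hz), hzd⟩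
          · exact ⟨w, Finset.mem_insert_self _ _, fun h => hyw (h ▸ hxw)⟩
        · by_cases hyw : G.dist w y = G.dist w u
          · exact ⟨w, Finset.mem_insert_self _ _, fun h => hxw (h.symm ▸ hyw)⟩
          · obtain ⟨z, hz, hzd⟩ := hS₂ x (Finset.mem_filter.mpr ⟨hx, hxw⟩)
              y (Finset.mem_filter.mpr ⟨hy, hyw⟩) hxy
            exact ⟨z, Finset.mem_insert_of_mem (Finset.mem_union_right _ hz), hzd⟩

/-- If V(G) \ T is a resolving set of a connected graph G, then there is a set
S ⊆ V(G) \ T with |S| ≤ |T| that resolves T. -/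
theorem small_witness_resolves_coresolving {V : Type*} [Fintype V] [DecidableEq V]
    (G : SimpleGraph V) (hG : G.Connected) (T : Finset V)
    (hres : ∀ x y : V, x ≠ y → ∃ w ∈ Finset.univ \ T, G.dist w x ≠ G.dist w y) :
    ∃ S : Finset V, S ⊆ Finset.univ \ T ∧ S.card ≤ T.card ∧
      ∀ u ∈ T, ∀ v ∈ T, u ≠ v → ∃ w ∈ S, G.dist u w ≠ G.dist v w := by
  obtain ⟨S, hSW, hSc, hS⟩ := aux_resolve G (Finset.univ \ T) T.card T le_rfl
    (fun x _ y _ hxy => hres x y hxy)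
  refine ⟨S, hSW, le_trans hSc (Nat.sub_le _ _), ?_⟩
  intro u hu v hv huv
  obtain ⟨w, hwS, hwd⟩ := hS u hu v hv huv
  exact ⟨w, hwS, by rwa [SimpleGraph.dist_comm (u := u) (v := w), SimpleGraph.dist_comm (u := v) (v := w)]⟩
end

section
/- Let G be a connected graph on n vertices. There exists a co-resolving set T of G of size at least k if and only if there is a partition V(G) = R ∪ B such that the number of equivalence classes of the B-equidistance relation restricted to R is at least k. -/
/-- A connected graph G on n ≥ 2k vertices has a co-resolving set of size at
least k iff there is a partition V(G) = R ∪ B such that R contains at least k pairwise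
non-B-equidistant vertices (i.e., at least k B-equidistance classes meet R). -/
theorem coresolving_iff_partition {V : Type*} [Fintype V] [DecidableEq V]
    (G : SimpleGraph V) (hG : G.Connected) (k : ℕ)
    (hn : 2 * k ≤ Fintype.card V) :
    (∃ T : Finset V, k ≤ T.card ∧
        ∀ x y : V, x ≠ y → ∃ w ∈ Finset.univ \ T, G.dist w x ≠ G.dist w y) ↔
    (∃ R B : Finset V, R ∪ B = Finset.univ ∧ R ∩ B = ∅ ∧
        ∃ Q : Finset V, Q ⊆ R ∧ k ≤ Q.card ∧
          ∀ u ∈ Q, ∀ v ∈ Q, u ≠ v → ∃ w ∈ B, G.dist u w ≠ G.dist v w) := by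
  constructor
  · rintro ⟨T, hTk, hres⟩
    refine ⟨T, Finset.univ \ T, ?_, ?_, T, subset_rfl, hTk, ?_⟩
    · simp [Finset.union_sdiff_of_subset (Finset.subset_univ T)]
    · simp [Finset.inter_sdiff_self]
    · intro u hu v hv huv
      obtain ⟨w, hw, hdw⟩ := hres u v huv
      exact ⟨w, hw, by simpa [SimpleGraph.dist_comm] using hdw⟩
  · rintro ⟨R, B, hRB, hdisj, Q, hQR, hQk, hres⟩
    refine ⟨Q, hQk, ?_⟩
    intro x y hxy
    by_cases hx : x ∈ Q
    · by_cases hy : y ∈ Q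
      · obtain ⟨w, hwB, hdw⟩ := hres x hx y hy hxy
        have hwT : w ∉ Q := fun hwQ =>
          Finset.notMem_empty w (hdisj ▸ Finset.mem_inter.mpr ⟨hQR hwQ, hwB⟩)
        exact ⟨w, Finset.mem_sdiff.mpr ⟨Finset.mem_univ w, hwT⟩,
          by simpa [SimpleGraph.dist_comm] using hdw⟩
      · refine ⟨y, Finset.mem_sdiff.mpr ⟨Finset.mem_univ y, hy⟩, ?_⟩
        have : 0 < G.dist y x := hG.pos_dist_of_ne (Ne.symm hxy)
        simp only [SimpleGraph.dist_self]
        omega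
    · refine ⟨x, Finset.mem_sdiff.mpr ⟨Finset.mem_univ x, hx⟩, ?_⟩
      have : 0 < G.dist x y := hG.pos_dist_of_ne hxy
      simp only [SimpleGraph.dist_self]
      omega
end

section
/- Let G be a pruned connected graph (every twin class has size at most 2) on n vertices. If G contains a clique or an independent set X with |X| ≥ 2k, then G has a co-resolving set of size at least k (equivalently, a resolving set of size at most n − k). -/
/-- A pruned connected graph (every twin class has size at most 2) containing
a clique or independent set of size at least 2k has a co-resolving set of size at least k. -/
theorem pruned_clique_or_indep_coresolving {V : Type*} [Fintype V] [DecidableEq V]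
    (G : SimpleGraph V) (hG : G.Connected) (k : ℕ)
    (hpruned : ∀ U : Finset V,
      ((∀ x ∈ U, ∀ y ∈ U, insert x (G.neighborSet x) = insert y (G.neighborSet y)) ∨
       (∀ x ∈ U, ∀ y ∈ U, G.neighborSet x = G.neighborSet y)) → U.card ≤ 2)
    (X : Finset V) (hX : 2 * k ≤ X.card)
    (hcliqueOrIndep : (∀ x ∈ X, ∀ y ∈ X, x ≠ y → G.Adj x y) ∨
                      (∀ x ∈ X, ∀ y ∈ X, ¬ G.Adj x y)) :
    ∃ T : Finset V, k ≤ T.card ∧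
      ∀ x y : V, x ≠ y → ∃ w ∈ Finset.univ \ T, G.dist w x ≠ G.dist w y := by
  classical
  -- general resolving fact: if w ∉ T and w = x (x ≠ y), dist differ
  have hres : ∀ (T : Finset V) (x y : V), x ≠ y → x ∉ T →
      ∃ w ∈ Finset.univ \ T, G.dist w x ≠ G.dist w y := by
    intro T x y hxy hxT
    refine ⟨x, by simp [hxT], ?_⟩
    rw [SimpleGraph.dist_self]
    exact fun h => hxy ((hG.dist_eq_zero_iff).mp h.symm)
  rcases Nat.eq_zero_or_pos k with hk | hk
  · subst hk
    refine ⟨∅, le_refl _, fun x y hxy => hres ∅ x y hxy (Finset.notMem_empty x)⟩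
  -- key of a vertex: neighbours outside X
  set key : V → Set V := fun x => G.neighborSet x \ ↑X with hkey
  set cls : V → Finset V := fun x => X.filter (fun y => key y = key x) with hcls
  -- class sizes ≤ 2
  have hclscard : ∀ x, (cls x).card ≤ 2 := by
    intro x
    apply hpruned
    rcases hcliqueOrIndep with hcl | hind
    · left
      intro a ha b hb
      simp only [hcls, Finset.mem_filter] at ha hb
      have hk : key a = key b := ha.2.trans hb.2.symm
      have hset : ∀ c, c ∈ X → (∀ z ∈ X, z ≠ c → G.Adj c z) →
          insert c (G.neighborSet c) = ↑X ∪ key c := by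
        intro c hc hadj
        ext z
        simp only [Set.mem_insert_iff, Set.mem_union, hkey, Set.mem_diff,
          SimpleGraph.mem_neighborSet, Finset.mem_coe]
        constructor
        · rintro (rfl | hz)
          · exact Or.inl hc
          · by_cases hzX : z ∈ X
            · exact Or.inl hzX
            · exact Or.inr ⟨hz, hzX⟩
        · rintro (hz | ⟨hz, _⟩)
          · rcases eq_or_ne z c with rfl | hne
            · exact Or.inl rfl
            · exact Or.inr (hadj z hz hne)
          · exact Or.inr hz
      rw [hset a ha.1 (fun z hz hne => hcl a ha.1 z hz hne.symm),
        hset b hb.1 (fun z hz hne => hcl b hb.1 z hz hne.symm), hk]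
    · right
      intro a ha b hb
      simp only [hcls, Finset.mem_filter] at ha hb
      have hk : key a = key b := ha.2.trans hb.2.symm
      have hset : ∀ c, c ∈ X → G.neighborSet c = key c := by
        intro c hc
        ext z
        simp only [hkey, Set.mem_diff, SimpleGraph.mem_neighborSet, Finset.mem_coe]
        exact ⟨fun h => ⟨h, fun hz => hind c hc z hz h⟩, fun h => h.1⟩
      rw [hset a ha.1, hset b hb.1, hk]
  -- the set of classes
  set Q : Finset (Finset V) := X.image cls with hQ
  have hCne : ∀ C ∈ Q, C.Nonempty := by
    intro C hC
    simp only [hQ, Finset.mem_image] at hC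
    obtain ⟨x, hx, rfl⟩ := hC
    exact ⟨x, by simp [hcls, hx]⟩
  -- classes determined by key: if z ∈ cls x then cls z = cls x
  have hclseq : ∀ x z, z ∈ cls x → cls z = cls x := by
    intro x z hz
    simp only [hcls, Finset.mem_filter] at hz ⊢
    ext y; simp only [Finset.mem_filter, hz.2]
  -- X = biUnion of Q
  have hdisj : ∀ C₁ ∈ Q, ∀ C₂ ∈ Q, C₁ ≠ C₂ → Disjoint C₁ C₂ := by
    intro C₁ h₁ C₂ h₂ hne
    simp only [hQ, Finset.mem_image] at h₁ h₂
    obtain ⟨x, hx, rfl⟩ := h₁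
    obtain ⟨y, hy, rfl⟩ := h₂
    rw [Finset.disjoint_left]
    intro z hz1 hz2
    exact hne ((hclseq x z hz1).symm.trans (hclseq y z hz2))
  have hXsub : X = Q.biUnion id := by
    apply Finset.Subset.antisymm
    · intro x hx
      simp only [Finset.mem_biUnion, hQ, Finset.mem_image, id]
      exact ⟨cls x, ⟨x, hx, rfl⟩, by simp [hcls, hx]⟩
    · intro x hx
      simp only [Finset.mem_biUnion, hQ, Finset.mem_image, id] at hx
      obtain ⟨C, ⟨y, hy, rfl⟩, hxC⟩ := hx
      exact (Finset.mem_filter.mp hxC).1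
  have hQcard : k ≤ Q.card := by
    have h1 : X.card = ∑ C ∈ Q, C.card := by
      rw [hXsub]
      exact Finset.card_biUnion (fun C h₁ C' h₂ h => hdisj C h₁ C' h₂ h)
    have h2 : ∑ C ∈ Q, C.card ≤ 2 * Q.card := by
      calc ∑ C ∈ Q, C.card ≤ ∑ _C ∈ Q, 2 := by
            apply Finset.sum_le_sum
            intro C hC
            simp only [hQ, Finset.mem_image] at hC
            obtain ⟨x, _, rfl⟩ := hC
            exact hclscard x
        _ = 2 * Q.card := by rw [Finset.sum_const, smul_eq_mul, mul_comm]
    omega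
  -- choose representatives
  have hXne : X.Nonempty := Finset.card_pos.mp (by omega)
  set rep : Finset V → V := fun C => if h : C.Nonempty then h.choose else hXne.choose with hrep
  set T : Finset V := Q.image rep with hT
  have hrepmem : ∀ C ∈ Q, rep C ∈ C := by
    intro C hC
    have h := hCne C hC
    simp only [hrep, dif_pos h]
    exact h.choose_spec
  have hTsub : T ⊆ X := by
    intro t ht
    simp only [hT, Finset.mem_image] at ht
    obtain ⟨C, hC, rfl⟩ := ht
    have := hrepmem C hC
    simp only [hQ, Finset.mem_image] at hC
    obtain ⟨x, hx, rfl⟩ := hC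
    exact (Finset.mem_filter.mp this).1
  have hinj : ∀ C₁ ∈ Q, ∀ C₂ ∈ Q, rep C₁ = rep C₂ → C₁ = C₂ := by
    intro C₁ h₁ C₂ h₂ heq
    by_contra hne
    have hd := hdisj C₁ h₁ C₂ h₂ hne
    exact (Finset.disjoint_left.mp hd (hrepmem C₁ h₁)) (heq ▸ hrepmem C₂ h₂)
  have hTcard : k ≤ T.card := by
    rw [hT, Finset.card_image_of_injOn hinj]
    exact hQcard
  refine ⟨T, hTcard, fun x y hxy => ?_⟩
  by_cases hxT : x ∈ T
  swap
  · exact hres T x y hxy hxT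
  by_cases hyT : y ∈ T
  swap
  · obtain ⟨w, hw, hd⟩ := hres T y x hxy.symm hyT
    exact ⟨w, hw, hd.symm⟩
  -- both in T: distinct keys
  have hkeyT : ∀ t ∈ T, cls t ∈ Q ∧ rep (cls t) = t := by
    intro t ht
    simp only [hT, Finset.mem_image] at ht
    obtain ⟨C, hC, rfl⟩ := ht
    obtain ⟨z, hz, rfl⟩ := Finset.mem_image.mp hC
    have hmem := hrepmem (cls z) hC
    have := hclseq z (rep (cls z)) hmem
    rw [this]
    exact ⟨hC, rfl⟩
  have hkne : key x ≠ key y := by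
    intro heq
    have hx := hkeyT x hxT
    have hy := hkeyT y hyT
    have : cls x = cls y := by
      simp only [hcls]
      ext z
      simp [heq]
    exact hxy (by rw [← hx.2, ← hy.2, this])
  -- find a distinguishing w
  have hwex : ∃ w, (w ∈ key x ∧ w ∉ key y) ∨ (w ∈ key y ∧ w ∉ key x) := by
    by_contra hcon
    push_neg at hcon
    apply hkne
    ext w
    have := hcon w
    tauto
  obtain ⟨w, hw⟩ := hwex
  have main : ∀ a b : V, a ∈ X → w ∈ key a → w ∉ key b →
      G.dist w a ≠ G.dist w b := by
    intro a b _ hwa hwb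
    have hadj : G.Adj w a := by
      simp only [hkey, Set.mem_diff, SimpleGraph.mem_neighborSet] at hwa
      exact hwa.1.symm
    have hwX : w ∉ X := by
      simp only [hkey, Set.mem_diff, Finset.mem_coe] at hwa
      exact hwa.2
    have hnadj : ¬ G.Adj w b := by
      intro h
      exact hwb (by simp only [hkey, Set.mem_diff, SimpleGraph.mem_neighborSet,
        Finset.mem_coe]; exact ⟨h.symm, hwX⟩)
    rw [SimpleGraph.dist_eq_one_iff_adj.mpr hadj]
    intro h
    exact hnadj (SimpleGraph.dist_eq_one_iff_adj.mp h.symm)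
  have hwX : w ∉ X := by
    rcases hw with ⟨hwa, _⟩ | ⟨hwa, _⟩ <;>
      · simp only [hkey, Set.mem_diff, Finset.mem_coe] at hwa
        exact hwa.2
  have hwT : w ∈ Finset.univ \ T := by
    simp only [Finset.mem_sdiff, Finset.mem_univ, true_and]
    exact fun h => hwX (hTsub h)
  rcases hw with ⟨h1, h2⟩ | ⟨h1, h2⟩
  · exact ⟨w, hwT, main x y (hTsub hxT) h1 h2⟩
  · exact ⟨w, hwT, fun h => main y x (hTsub hyT) h1 h2 h.symm⟩
end

section
/- Let G be a graph and S ⊆ V(G) a set of vertices such that any two vertices of S have symmetric-difference of neighbourhoods at most 2k (|N_G(u) △ N_G(u')| ≤ 2k for all u, u' ∈ S). If some vertex u₁ ∈ S has at least 4k² neighbours in S, then G contains a clique of size at least 2k. -/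
/-- If all pairs in S have neighbourhood symmetric difference at most 2k and
some u₁ ∈ S has at least 4k² neighbours in S, then G contains a clique of size at
least 2k. -/
theorem clique_from_dense_similar {V : Type*} [Fintype V] [DecidableEq V]
    (G : SimpleGraph V) [DecidableRel G.Adj] (k : ℕ) (S : Finset V)
    (hsim : ∀ u ∈ S, ∀ u' ∈ S,
      (symmDiff (G.neighborFinset u) (G.neighborFinset u')).card ≤ 2 * k)
    (u₁ : V) (hu₁ : u₁ ∈ S)
    (hdense : 4 * k ^ 2 ≤ (S.filter (fun x => G.Adj u₁ x)).card) :
    ∃ C : Finset V, 2 * k ≤ C.card ∧ ∀ x ∈ C, ∀ y ∈ C, x ≠ y → G.Adj x y := by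
  rcases Nat.eq_zero_or_pos k with hk | hk
  · exact ⟨∅, by simp [hk], by simp⟩
  -- greedy construction lemma
  have key : ∀ j : ℕ, ∀ T : Finset V, T ⊆ S → (∀ x ∈ T, G.Adj u₁ x) →
      j * (2 * k + 1) ≤ T.card →
      ∃ C : Finset V, C ⊆ T ∧ C.card = j ∧
        ∀ x ∈ C, ∀ y ∈ C, x ≠ y → G.Adj x y := by
    intro j
    induction j with
    | zero => intro T _ _ _; exact ⟨∅, by simp, by simp, by simp⟩
    | succ j ih =>
      intro T hTS hTadj hcard
      have hmul : (j + 1) * (2 * k + 1) = j * (2 * k + 1) + (2 * k + 1) := by ring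
      have hT : T.Nonempty := by
        rw [← Finset.card_pos]
        set m := j * (2 * k + 1)
        omega
      obtain ⟨u, huT⟩ := hT
      set T' := (T.erase u).filter (fun x => G.Adj u x) with hT'
      have hbad : T.filter (fun x => ¬ (x ∈ (T.erase u).filter (fun y => G.Adj u y))) ⊆
          insert u (symmDiff (G.neighborFinset u₁) (G.neighborFinset u)) := by
        intro x hx
        simp only [Finset.mem_filter, Finset.mem_erase] at hx
        obtain ⟨hxT, hx2⟩ := hx
        by_cases hxu : x = u
        · simp [hxu]
        · have hnadj : ¬ G.Adj u x := by tauto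
          have : x ∈ symmDiff (G.neighborFinset u₁) (G.neighborFinset u) := by
            rw [Finset.mem_symmDiff]
            left
            refine ⟨?_, ?_⟩
            · rw [SimpleGraph.mem_neighborFinset]; exact hTadj x hxT
            · rw [SimpleGraph.mem_neighborFinset]; exact hnadj
          exact Finset.mem_insert_of_mem this
      have hbadcard : (T.filter (fun x => ¬ (x ∈ (T.erase u).filter (fun y => G.Adj u y)))).card
          ≤ 2 * k + 1 := by
        calc _ ≤ (insert u (symmDiff (G.neighborFinset u₁) (G.neighborFinset u))).card :=
              Finset.card_le_card hbad
          _ ≤ (symmDiff (G.neighborFinset u₁) (G.neighborFinset u)).card + 1 :=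
              Finset.card_insert_le _ _
          _ ≤ 2 * k + 1 := by
              have := hsim u₁ hu₁ u (hTS huT)
              omega
      have hsplit : (T.filter (fun x => x ∈ (T.erase u).filter (fun y => G.Adj u y))).card +
          (T.filter (fun x => ¬ (x ∈ (T.erase u).filter (fun y => G.Adj u y)))).card = T.card :=
        Finset.card_filter_add_card_filter_not _
      have hT'eq : T.filter (fun x => x ∈ (T.erase u).filter (fun y => G.Adj u y)) = T' := by
        rw [hT']
        ext x
        simp only [Finset.mem_filter, Finset.mem_erase]
        tauto
      have hT'card : j * (2 * k + 1) ≤ T'.card := by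
        rw [hT'eq] at hsplit
        set m := j * (2 * k + 1)
        omega
      have hT'subT : T' ⊆ T := by
        intro x hx
        rw [hT'] at hx
        simp only [Finset.mem_filter, Finset.mem_erase] at hx
        exact hx.1.2
      obtain ⟨C, hCT', hCcard, hCclique⟩ := ih T' (hT'subT.trans hTS)
        (fun x hx => hTadj x (hT'subT hx)) hT'card
      have hadjC : ∀ x ∈ C, G.Adj u x := by
        intro x hx
        have := hCT' hx
        rw [hT'] at this
        simp only [Finset.mem_filter, Finset.mem_erase] at this
        exact this.2
      have huC : u ∉ C := by
        intro h
        exact G.irrefl (hadjC u h)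
      refine ⟨insert u C, ?_, ?_, ?_⟩
      · intro x hx
        rcases Finset.mem_insert.mp hx with rfl | hx
        · exact huT
        · exact hT'subT (hCT' hx)
      · rw [Finset.card_insert_of_notMem huC, hCcard]
      · intro x hx y hy hxy
        rcases Finset.mem_insert.mp hx with h1 | h1 <;>
          rcases Finset.mem_insert.mp hy with h2 | h2
        · exact absurd (h1.trans h2.symm) hxy
        · subst h1; exact hadjC y h2
        · subst h2; exact (hadjC x h1).symm
        · exact hCclique x h1 y h2 hxy
  obtain ⟨m, rfl⟩ : ∃ m, k = m + 1 := ⟨k - 1, by omega⟩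
  have hle : (2 * (m + 1) - 1) * (2 * (m + 1) + 1) ≤ (S.filter (fun x => G.Adj u₁ x)).card := by
    have h1 : 2 * (m + 1) - 1 = 2 * m + 1 := by omega
    rw [h1]
    have h2 : (2 * m + 1) * (2 * (m + 1) + 1) = 4 * m ^ 2 + 8 * m + 3 := by ring
    have h3 : 4 * (m + 1) ^ 2 = 4 * m ^ 2 + 8 * m + 4 := by ring
    omega
  obtain ⟨C, hCsub, hCcard, hCclique⟩ := key (2 * (m + 1) - 1)
    (S.filter (fun x => G.Adj u₁ x)) (Finset.filter_subset _ _)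
    (fun x hx => (Finset.mem_filter.mp hx).2) hle
  have hadjC : ∀ x ∈ C, G.Adj u₁ x := fun x hx => (Finset.mem_filter.mp (hCsub hx)).2
  have hu₁C : u₁ ∉ C := fun h => G.irrefl (hadjC u₁ h)
  refine ⟨insert u₁ C, ?_, ?_⟩
  · rw [Finset.card_insert_of_notMem hu₁C, hCcard]
    omega
  · intro x hx y hy hxy
    rcases Finset.mem_insert.mp hx with h1 | h1 <;>
      rcases Finset.mem_insert.mp hy with h2 | h2
    · exact absurd (h1.trans h2.symm) hxy
    · subst h1; exact hadjC y h2
    · subst h2; exact (hadjC x h1).symm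
    · exact hCclique x h1 y h2 hxy
end

section
/- Let G be a pruned connected graph on n vertices (every twin class has size at most 2), and define the auxiliary graph H on V(G) with edges uv whenever |N_G(u) △ N_G(v)| ≤ k. If H has an independent set of size k, then G has a resolving set of size n − k. -/
/-- In a pruned connected graph G on n vertices, if there is a set X of k
vertices that is independent in the auxiliary graph H (i.e., all pairs in X have
neighbourhood symmetric difference more than k), then G has a resolving set of size
n - k, namely V(G) \ X. -/
theorem aux_indep_gives_resolving {V : Type*} [Fintype V] [DecidableEq V]
    (G : SimpleGraph V) [DecidableRel G.Adj] (hG : G.Connected) (k : ℕ)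
    (hpruned : ∀ U : Finset V,
      ((∀ x ∈ U, ∀ y ∈ U, insert x (G.neighborSet x) = insert y (G.neighborSet y)) ∨
       (∀ x ∈ U, ∀ y ∈ U, G.neighborSet x = G.neighborSet y)) → U.card ≤ 2)
    (X : Finset V) (hX : X.card = k)
    (hindep : ∀ u ∈ X, ∀ v ∈ X, u ≠ v →
      k < (symmDiff (G.neighborFinset u) (G.neighborFinset v)).card) :
    ∃ W : Finset V, W.card = Fintype.card V - k ∧
      ∀ x y : V, x ≠ y → ∃ w ∈ W, G.dist w x ≠ G.dist w y := by
  refine ⟨Xᶜ, by simp [Finset.card_compl, hX], ?_⟩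
  intro x y hxy
  -- helper: if a vertex z is outside X, it resolves x,y when z = x or z = y
  have hself : ∀ a b : V, a ≠ b → a ∉ X → ∃ w ∈ Xᶜ, G.dist w a ≠ G.dist w b := by
    intro a b hab haX
    refine ⟨a, Finset.mem_compl.mpr haX, ?_⟩
    rw [SimpleGraph.dist_self]
    intro h
    exact hab ((hG.dist_eq_zero_iff).mp h.symm)
  by_cases hx : x ∈ X
  · by_cases hy : y ∈ X
    · -- both in X: use symmetric difference
      have hbig := hindep x hx y hy hxy
      have : ¬ (symmDiff (G.neighborFinset x) (G.neighborFinset y)) ⊆ X := by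
        intro hsub
        exact absurd (Finset.card_le_card hsub) (by omega)
      obtain ⟨w, hwmem, hwX⟩ := Finset.not_subset.mp this
      refine ⟨w, Finset.mem_compl.mpr hwX, ?_⟩
      have hwx : w ≠ x := by rintro rfl; exact hwX hx
      have hwy : w ≠ y := by rintro rfl; exact hwX hy
      rw [Finset.mem_symmDiff] at hwmem
      rcases hwmem with ⟨h1, h2⟩ | ⟨h1, h2⟩
      · rw [SimpleGraph.mem_neighborFinset] at h1 h2
        have d1 : G.dist w x = 1 := by
          rw [SimpleGraph.dist_eq_one_iff_adj]; exact h1.symm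
        have d2 : G.dist w y ≠ 1 := by
          intro h
          exact h2 (SimpleGraph.dist_eq_one_iff_adj.mp h).symm
        omega
      · rw [SimpleGraph.mem_neighborFinset] at h1 h2
        have d1 : G.dist w y = 1 := by
          rw [SimpleGraph.dist_eq_one_iff_adj]; exact h1.symm
        have d2 : G.dist w x ≠ 1 := by
          intro h
          exact h2 (SimpleGraph.dist_eq_one_iff_adj.mp h).symm
        omega
    · obtain ⟨w, hw, h⟩ := hself y x hxy.symm hy
      exact ⟨w, hw, h.symm⟩
  · exact hself x y hxy hx
end
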